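/- The factor map π: Ω → ℤ₂ from the Thue-Morse subshift to the odometer has fibers of cardinality at most 4: for every z ∈ ℤ₂, the set π⁻¹(z) has at most 4 elements, and for z not in the ℤ-orbit of 0 it has exactly 2 elements. -/

import Mathlib

/-- Thue-Morse sequence: parity of number of 1s in binary expansion. -/
def tm (n : ℕ) : Fin 2 := Fin.ofNat 2 ((Nat.digits 2 n).count 1)

/-- Thue-Morse substitution on letters. -/
def zetaWord (a : Fin 2) : List (Fin 2) := [a, 1 - a]

/-- Thue-Morse substitution on words. -/
def zetaL (w : List (Fin 2)) : List (Fin 2) := w.flatMap zetaWord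

/-- Shift on bi-infinite sequences. -/
def shiftZ (w : ℤ → Fin 2) : ℤ → Fin 2 := fun n => w (n + 1)

/-- ζ on bi-infinite sequences: ζ(w)(2n)=w(n), ζ(w)(2n+1)=1-w(n). -/
def zetaZ (w : ℤ → Fin 2) : ℤ → Fin 2 :=
  fun n => if n % 2 = 0 then w (n / 2) else 1 - w (n / 2)

/-- `v` occurs as a factor of the bi-infinite word `w`. -/
def IsFactorZ (v : List (Fin 2)) (w : ℤ → Fin 2) : Prop :=
  ∃ i : ℤ, ∀ k : ℕ, k < v.length → w (i + k) = v.getD k 0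

/-- The Thue-Morse subshift: bi-infinite words all of whose factors occur in some ζⁿ(0). -/
def Omega : Set (ℤ → Fin 2) :=
  {w | ∀ v : List (Fin 2), IsFactorZ v w → ∃ n : ℕ, v <:+: zetaL^[n] [0]}

/-!
Every `w ∈ Omega` is uniquely desubstituted: its squares `w i = w (i + 1)` all have the same
parity, which locates the cut of `w` into blocks `ζ(a)`, and reading one letter per block gives
again a word of `Omega`. Iterating records the phases `digit w k ∈ {0, 1}` of these cuts, and
`π w = ∑ digit w k 2^k`; the shift adds one to the lowest phase, with carry, so `π ∘ σ = π + 1`.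
Two words over the same `z` are cut into blocks `ζ^k(a)` at the same places, so their sum is
constant on each block. If `z ∉ ℤ`, the block of level `k` around `0` exhausts `ℤ` as `k → ∞`,
which leaves `w` and its complement; if `z ∈ ℤ`, the blocks exhaust the two half-lines on either
side of `-z`, which leaves at most `2 · 2` words.
-/

open Function Set Filter Topology PadicInt Fin.NatCast

lemma fin_two_one_sub (a : Fin 2) : 1 - a = a + 1 := by revert a; decide

lemma fin_two_eq_add_one_of_ne {a b : Fin 2} (h : a ≠ b) : b = a + 1 := by revert a b; decide

lemma fin_two_ne_add_one (a : Fin 2) : a ≠ a + 1 := by revert a; decide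

lemma fin_two_add_add_add_cancel (a b s t : Fin 2) : a + s + (b + s) = a + t + (b + t) := by
  revert a b s t; decide

lemma fin_two_eq_of_add_eq_add_self {a b c : Fin 2} (h : a + b = c + c) : a = b := by
  revert a b c; decide

lemma tm_zero : tm 0 = 0 := rfl

lemma tm_one : tm 1 = 1 := rfl

lemma tm_two_mul (n : ℕ) : tm (2 * n) = tm n := by
  rcases Nat.eq_zero_or_pos n with rfl | hn
  · rfl
  · simp [tm, Nat.digits_def' one_lt_two (by omega : 0 < 2 * n)]

lemma tm_two_mul_add_one (n : ℕ) : tm (2 * n + 1) = tm n + 1 := by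
  simp [tm, Nat.add_div, Fin.ofNat_eq_cast]

lemma tm_mul_two_pow_add (a m : ℕ) {j : ℕ} (hj : j < 2 ^ m) :
    tm (a * 2 ^ m + j) = tm a + tm j := by
  induction m generalizing j with
  | zero => simp [Nat.lt_one_iff.mp hj, tm_zero]
  | succ m ih =>
    obtain ⟨s, rfl | rfl⟩ : ∃ s, j = 2 * s ∨ j = 2 * s + 1 := ⟨j / 2, by omega⟩
    · rw [show a * 2 ^ (m + 1) + 2 * s = 2 * (a * 2 ^ m + s) by ring, tm_two_mul,
        ih (by omega), tm_two_mul]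
    · rw [show a * 2 ^ (m + 1) + (2 * s + 1) = 2 * (a * 2 ^ m + s) + 1 by ring,
        tm_two_mul_add_one, ih (by omega), tm_two_mul_add_one, add_assoc]

/-- `2 ^ n - 1 - j` is `j` with its `n` binary digits complemented. -/
lemma tm_two_pow_sub_one_sub (n : ℕ) {j : ℕ} (hj : j < 2 ^ n) :
    tm (2 ^ n - 1 - j) = tm j + (n : Fin 2) := by
  induction n generalizing j with
  | zero => simp [Nat.lt_one_iff.mp hj]
  | succ n ih =>
    obtain ⟨s, rfl | rfl⟩ : ∃ s, j = 2 * s ∨ j = 2 * s + 1 := ⟨j / 2, by omega⟩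
    · rw [show 2 ^ (n + 1) - 1 - 2 * s = 2 * (2 ^ n - 1 - s) + 1 by rw [pow_succ]; omega,
        tm_two_mul_add_one, ih (by rw [pow_succ] at hj; omega), tm_two_mul]
      push_cast
      grind
    · rw [show 2 ^ (n + 1) - 1 - (2 * s + 1) = 2 * (2 ^ n - 1 - s) by rw [pow_succ]; omega,
        tm_two_mul, ih (by rw [pow_succ] at hj; omega), tm_two_mul_add_one]
      push_cast
      grind

lemma odd_of_tm_eq_tm_succ {j : ℕ} (h : tm j = tm (j + 1)) : j % 2 = 1 := by
  by_contra hj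
  obtain ⟨m, rfl⟩ : ∃ m, j = 2 * m := ⟨j / 2, by omega⟩
  rw [tm_two_mul, tm_two_mul_add_one] at h
  exact fin_two_ne_add_one _ h

lemma exists_tm_eq_tm_succ (o : ℕ) : ∃ j, o ≤ j ∧ j ≤ o + 3 ∧ tm j = tm (j + 1) := by
  set m := o / 2
  -- a square at `2 m + 1` or `2 m + 3` comes from a non-square at `m` or `m + 1`
  by_cases hm : tm m = tm (m + 1)
  · have hne : tm (m + 1) ≠ tm (m + 2) := fun h ↦ by
      have := odd_of_tm_eq_tm_succ hm
      have := odd_of_tm_eq_tm_succ h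
      omega
    refine ⟨2 * (m + 1) + 1, by omega, by omega, ?_⟩
    rw [tm_two_mul_add_one, show 2 * (m + 1) + 1 + 1 = 2 * (m + 2) by ring, tm_two_mul]
    exact (fin_two_eq_add_one_of_ne hne).symm
  · refine ⟨2 * m + 1, by omega, by omega, ?_⟩
    rw [tm_two_mul_add_one, show 2 * m + 1 + 1 = 2 * (m + 1) by ring, tm_two_mul]
    exact (fin_two_eq_add_one_of_ne hm).symm

lemma zetaL_map_tm_range (m : ℕ) : zetaL ((List.range m).map tm) = (List.range (2 * m)).map tm := by
  induction m with
  | zero => rfl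
  | succ m ih =>
    rw [List.range_succ, List.map_append, zetaL, List.flatMap_append, ← zetaL, ih,
      show 2 * (m + 1) = 2 * m + 1 + 1 by ring, List.range_succ, List.range_succ]
    simp [zetaWord, tm_two_mul, tm_two_mul_add_one, fin_two_one_sub]

lemma zetaL_iterate_singleton_zero (n : ℕ) : zetaL^[n] [0] = (List.range (2 ^ n)).map tm := by
  induction n with
  | zero => rfl
  | succ n ih => rw [iterate_succ_apply', ih, zetaL_map_tm_range, pow_succ, mul_comm]

lemma infix_map_tm_range_iff {v : List (Fin 2)} {N : ℕ} :
    v <:+: (List.range N).map tm ↔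
      ∃ o, v.length + o ≤ N ∧ ∀ k (hk : k < v.length), v[k] = tm (o + k) := by
  simp only [List.infix_iff_getElem?, List.length_map, List.length_range]
  refine exists_congr fun o ↦ and_congr_right fun hN ↦ forall₂_congr fun k hk ↦ ?_
  rw [List.getElem?_map, List.getElem?_range (by omega), Option.map_some, Option.some_inj,
    add_comm k, eq_comm]

lemma mem_Omega_iff {w : ℤ → Fin 2} :
    w ∈ Omega ↔ ∀ (i : ℤ) (L : ℕ), ∃ o : ℕ, ∀ k < L, w (i + k) = tm (o + k) := by
  simp only [Omega, mem_ofPred_eq, zetaL_iterate_singleton_zero, infix_map_tm_range_iff]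
  constructor
  · intro hw i L
    obtain ⟨-, o, -, ho⟩ := hw (List.ofFn fun k : Fin L ↦ w (i + k))
      ⟨i, fun k hk ↦ by simp_all [List.getD_eq_getElem?_getD]⟩
    refine ⟨o, fun k hk ↦ ?_⟩
    have := ho k (by simpa using hk)
    rwa [List.getElem_ofFn] at this
  · rintro hw v ⟨i, hv⟩
    obtain ⟨o, ho⟩ := hw i v.length
    refine ⟨v.length + o, o, (Nat.lt_two_pow_self).le, fun k hk ↦ ?_⟩
    rw [← ho k hk, hv k hk, List.getD_eq_getElem _ _ hk]

lemma isOpen_setOf_isFactorZ (v : List (Fin 2)) : IsOpen {w | IsFactorZ v w} := by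
  have : {w | IsFactorZ v w} =
      ⋃ i : ℤ, ⋂ k ∈ Iio v.length, (fun w : ℤ → Fin 2 ↦ w (i + k)) ⁻¹' {v.getD k 0} := by
    ext; simp [IsFactorZ]
  rw [this]
  exact isOpen_iUnion fun i ↦ (finite_Iio _).isOpen_biInter fun k _ ↦
    (isOpen_discrete _).preimage (continuous_apply (i + k))

lemma isClosed_Omega : IsClosed Omega := by
  simp only [Omega, ofPred_forall]
  refine isClosed_iInter fun v ↦ ?_
  by_cases hv : ∃ n, v <:+: zetaL^[n] [0]
  · simp [hv]
  · simp only [hv, imp_false]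
    exact (isOpen_setOf_isFactorZ v).isClosed_compl

lemma mapsTo_shiftZ : MapsTo shiftZ Omega Omega := by
  intro w hw
  rw [mem_Omega_iff] at hw ⊢
  intro i L
  obtain ⟨o, ho⟩ := hw (i + 1) L
  exact ⟨o, fun k hk ↦ by rw [← ho k hk, shiftZ, add_right_comm]⟩

def flipZ (w : ℤ → Fin 2) : ℤ → Fin 2 := fun n ↦ w n + 1

lemma flipZ_ne (w : ℤ → Fin 2) : flipZ w ≠ w := fun h ↦ fin_two_ne_add_one _ (congrFun h 0).symm

lemma flipZ_mem_Omega {w : ℤ → Fin 2} (hw : w ∈ Omega) : flipZ w ∈ Omega := by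
  rw [mem_Omega_iff] at hw ⊢
  intro i L
  obtain ⟨o, ho⟩ := hw i L
  have hlt : o + L < 2 ^ (o + L) := Nat.lt_two_pow_self
  refine ⟨1 * 2 ^ (o + L) + o, fun k hk ↦ ?_⟩
  rw [flipZ, ho k hk, add_assoc, tm_mul_two_pow_add _ _ (by omega), tm_one, add_comm]

/-- The two-sided fixed point `ζ^∞(0).ζ^∞(0)` of `ζ²`: its left half is `tm` read backwards
because the words `ζ^(2k)(0)` are palindromes. -/
def tmZ (n : ℤ) : Fin 2 := if 0 ≤ n then tm n.toNat else tm (-n - 1).toNat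

lemma tmZ_eq_tm (t : ℕ) {x : ℤ} (h₁ : -(4 ^ t : ℕ) ≤ x) (h₂ : x < (4 ^ t : ℕ)) :
    tmZ x = tm ((6 * 4 ^ t : ℕ) + x).toNat := by
  have h4 : 4 ^ t = 2 ^ (2 * t) := by rw [pow_mul]; norm_num
  unfold tmZ
  split_ifs with hx
  · rw [show ((6 * 4 ^ t : ℕ) + x).toNat = 6 * 2 ^ (2 * t) + x.toNat by omega,
      tm_mul_two_pow_add _ _ (by omega), show tm 6 = 0 by decide, zero_add]
  · set j := ((4 ^ t : ℕ) + x).toNat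
    rw [show ((6 * 4 ^ t : ℕ) + x).toNat = 5 * 2 ^ (2 * t) + j by omega,
      tm_mul_two_pow_add _ _ (by omega), show tm 5 = 0 by decide, zero_add,
      show (-x - 1).toNat = 2 ^ (2 * t) - 1 - j by omega, tm_two_pow_sub_one_sub _ (by omega)]
    simp

lemma tmZ_mem_Omega : tmZ ∈ Omega := by
  rw [mem_Omega_iff]
  intro i L
  set t := i.natAbs + L
  have : t < 4 ^ t := Nat.lt_pow_self (by norm_num)
  refine ⟨((6 * 4 ^ t : ℕ) + i).toNat, fun k hk ↦ ?_⟩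
  rw [tmZ_eq_tm t (by omega) (by omega)]
  congr 1
  omega

lemma square_iff_of_window {w : ℤ → Fin 2} {i : ℤ} {o L : ℕ}
    (ho : ∀ k < L, w (i + k) = tm (o + k)) {k : ℕ} (hk : k + 1 < L) :
    w (i + k) = w (i + k + 1) ↔ tm (o + k) = tm (o + k + 1) := by
  rw [ho k (by omega), show i + k + 1 = i + (k + 1 : ℕ) by push_cast; ring, ho (k + 1) hk,
    add_assoc]

lemma emod_two_eq_of_squares {w : ℤ → Fin 2} (hw : w ∈ Omega) {i j : ℤ}
    (hi : w i = w (i + 1)) (hj : w j = w (j + 1)) : i % 2 = j % 2 := by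
  wlog hij : i ≤ j generalizing i j
  · exact (this hj hi (by omega)).symm
  obtain ⟨d, rfl⟩ : ∃ d : ℕ, j = i + d := ⟨(j - i).toNat, by omega⟩
  obtain ⟨o, ho⟩ := mem_Omega_iff.mp hw i (d + 2)
  have h₀ := odd_of_tm_eq_tm_succ ((square_iff_of_window ho (k := 0) (by omega)).mp
    (by simpa using hi))
  have h₁ := odd_of_tm_eq_tm_succ ((square_iff_of_window ho (k := d) (by omega)).mp hj)
  omega

lemma exists_square_mem_Icc {w : ℤ → Fin 2} (hw : w ∈ Omega) (i : ℤ) :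
    ∃ p, i ≤ p ∧ p ≤ i + 3 ∧ w p = w (p + 1) := by
  obtain ⟨o, ho⟩ := mem_Omega_iff.mp hw i 5
  obtain ⟨j, hoj, hjo, hj⟩ := exists_tm_eq_tm_succ o
  refine ⟨i + (j - o : ℕ), by omega, by omega, (square_iff_of_window ho (by omega)).mpr ?_⟩
  rwa [Nat.add_sub_cancel' hoj]

/-- The blocks `ζ(a) = a (1 - a)` of `w ∈ Omega` start at the positions `≡ blockPhase w` mod 2;
the first square `w i = w (i + 1)` ends a block. -/
def blockPhase (w : ℤ → Fin 2) : ℕ :=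
  if w 0 = w 1 then 1 else if w 1 = w 2 then 0 else if w 2 = w 3 then 1 else 0

def desubst (w : ℤ → Fin 2) : ℤ → Fin 2 := fun n ↦ w (2 * n - blockPhase w)

lemma blockPhase_le_one (w : ℤ → Fin 2) : blockPhase w ≤ 1 := by
  unfold blockPhase; split_ifs <;> omega

lemma blockPhase_add_emod_two {w : ℤ → Fin 2} (hw : w ∈ Omega) {i : ℤ}
    (hi : w i = w (i + 1)) : (blockPhase w : ℤ) + i % 2 = 1 := by
  unfold blockPhase
  split_ifs with h₀ h₁ h₂
  · have := emod_two_eq_of_squares hw hi (j := 0) h₀; omega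
  · have := emod_two_eq_of_squares hw hi (j := 1) h₁; omega
  · have := emod_two_eq_of_squares hw hi (j := 2) h₂; omega
  · obtain ⟨p, hp₀, hp₃, hp⟩ := exists_square_mem_Icc hw 0
    have := emod_two_eq_of_squares hw hi hp
    interval_cases p <;> simp_all

lemma apply_two_mul_add_one_sub_blockPhase {w : ℤ → Fin 2} (hw : w ∈ Omega) (x : ℤ) :
    w (2 * x + 1 - blockPhase w) = desubst w x + 1 := by
  refine fin_two_eq_add_one_of_ne fun h ↦ ?_
  have := blockPhase_add_emod_two hw (i := 2 * x - blockPhase w)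
    (by rwa [show 2 * x - (blockPhase w : ℤ) + 1 = 2 * x + 1 - blockPhase w by ring])
  have := blockPhase_le_one w
  omega

lemma mapsTo_desubst : MapsTo desubst Omega Omega := by
  intro w hw
  rw [mem_Omega_iff]
  intro i L
  set i₀ := 2 * i - blockPhase w
  obtain ⟨o, ho⟩ := mem_Omega_iff.mp hw i₀ (2 * L + 5)
  -- a square of `tm` sits at an odd position and one of `w` right before a block start,
  -- so the window of `tm` matching `w` from the block start `i₀` starts at an even position
  obtain ⟨j, hoj, hjo, hj⟩ := exists_tm_eq_tm_succ o
  have hsq := (square_iff_of_window ho (k := j - o) (by omega)).mpr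
    (by rwa [Nat.add_sub_cancel' hoj])
  have h₁ := blockPhase_add_emod_two hw hsq
  have h₂ := odd_of_tm_eq_tm_succ hj
  have h₃ := blockPhase_le_one w
  refine ⟨o / 2, fun k hk ↦ ?_⟩
  rw [desubst, show 2 * (i + k) - blockPhase w = i₀ + (2 * k : ℕ) by push_cast; ring,
    ho _ (by omega), show o + 2 * k = 2 * (o / 2 + k) by omega, tm_two_mul]

lemma blockPhase_shiftZ {w : ℤ → Fin 2} (hw : w ∈ Omega) :
    (blockPhase (shiftZ w) : ℤ) = 1 - blockPhase w := by
  obtain ⟨p, -, -, hp⟩ := exists_square_mem_Icc hw 0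
  have h₁ := blockPhase_add_emod_two hw hp
  have h₂ := blockPhase_add_emod_two (mapsTo_shiftZ hw) (i := p - 1) (by simpa [shiftZ] using hp)
  have := blockPhase_le_one w
  have := blockPhase_le_one (shiftZ w)
  omega

lemma desubst_shiftZ_of_blockPhase_eq_zero {w : ℤ → Fin 2} (hw : w ∈ Omega)
    (h : blockPhase w = 0) : desubst (shiftZ w) = desubst w := by
  have := blockPhase_shiftZ hw
  funext n
  simp only [desubst, shiftZ]
  congr 1
  omega

lemma desubst_shiftZ_of_blockPhase_eq_one {w : ℤ → Fin 2} (hw : w ∈ Omega)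
    (h : blockPhase w = 1) : desubst (shiftZ w) = shiftZ (desubst w) := by
  have := blockPhase_shiftZ hw
  funext n
  simp only [desubst, shiftZ]
  congr 1
  omega

lemma blockPhase_flipZ (w : ℤ → Fin 2) : blockPhase (flipZ w) = blockPhase w := by
  simp only [blockPhase, flipZ, add_left_inj]

lemma commute_desubst_flipZ : Function.Commute desubst flipZ := by
  intro w
  funext n
  simp only [desubst, flipZ, blockPhase_flipZ]

def digit (w : ℤ → Fin 2) (k : ℕ) : ℕ := blockPhase (desubst^[k] w)

def partialSum (w : ℤ → Fin 2) (k : ℕ) : ℕ := ∑ j ∈ Finset.range k, digit w j * 2 ^ j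

lemma digit_le_one (w : ℤ → Fin 2) (k : ℕ) : digit w k ≤ 1 := blockPhase_le_one _

lemma digit_zero (w : ℤ → Fin 2) : digit w 0 = blockPhase w := rfl

lemma digit_succ (w : ℤ → Fin 2) (k : ℕ) : digit w (k + 1) = digit (desubst w) k := rfl

lemma digit_flipZ (w : ℤ → Fin 2) (k : ℕ) : digit (flipZ w) k = digit w k := by
  rw [digit, commute_desubst_flipZ.iterate_left k w, blockPhase_flipZ, digit]

lemma partialSum_succ (w : ℤ → Fin 2) (k : ℕ) :
    partialSum w (k + 1) = partialSum w k + digit w k * 2 ^ k :=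
  Finset.sum_range_succ _ _

lemma partialSum_succ' (w : ℤ → Fin 2) (k : ℕ) :
    partialSum w (k + 1) = digit w 0 + 2 * partialSum (desubst w) k := by
  rw [partialSum, Finset.sum_range_succ', partialSum, Finset.mul_sum, add_comm]
  simp only [digit_succ, pow_succ, pow_zero, mul_one]
  congr 1
  exact Finset.sum_congr rfl fun j _ ↦ by ring

lemma partialSum_lt (w : ℤ → Fin 2) (k : ℕ) : partialSum w k < 2 ^ k := by
  induction k with
  | zero => simp [partialSum]
  | succ k ih =>
    have := digit_le_one w k
    rw [partialSum_succ, pow_succ]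
    nlinarith

lemma partialSum_mono (w : ℤ → Fin 2) : Monotone (partialSum w) :=
  monotone_nat_of_le_succ fun k ↦ by rw [partialSum_succ]; omega

lemma apply_eq_desubst_iterate_add_tm (k : ℕ) {w : ℤ → Fin 2} (hw : w ∈ Omega) (q : ℤ)
    {r : ℕ} (hr : r < 2 ^ k) :
    w (2 ^ k * q + r - partialSum w k) = desubst^[k] w q + tm r := by
  induction k generalizing w r with
  | zero => simp [Nat.lt_one_iff.mp hr, partialSum, tm_zero]
  | succ k ih =>
    obtain ⟨s, rfl | rfl⟩ : ∃ s, r = 2 * s ∨ r = 2 * s + 1 := ⟨r / 2, by omega⟩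
    · rw [show 2 ^ (k + 1) * q + (2 * s : ℕ) - partialSum w (k + 1) =
          2 * (2 ^ k * q + s - partialSum (desubst w) k) - blockPhase w by
          rw [partialSum_succ', digit_zero]; push_cast; ring,
        tm_two_mul, iterate_succ_apply]
      exact ih (mapsTo_desubst hw) (by omega)
    · rw [show 2 ^ (k + 1) * q + (2 * s + 1 : ℕ) - partialSum w (k + 1) =
          2 * (2 ^ k * q + s - partialSum (desubst w) k) + 1 - blockPhase w by
          rw [partialSum_succ', digit_zero]; push_cast; ring,
        apply_two_mul_add_one_sub_blockPhase hw, ih (mapsTo_desubst hw) (by omega),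
        tm_two_mul_add_one, iterate_succ_apply, add_assoc]

namespace PadicInt

variable {p : ℕ} [Fact p.Prime]

lemma norm_mul_pow_le (x : ℤ_[p]) (k : ℕ) : ‖x * (p : ℤ_[p]) ^ k‖ ≤ (p : ℝ)⁻¹ ^ k := by
  rw [norm_mul, norm_p_pow, zpow_neg, zpow_natCast, inv_pow]
  exact mul_le_of_le_one_left (by positivity) (norm_le_one x)

lemma summable_geometric_inv_prime : Summable fun k : ℕ ↦ (p : ℝ)⁻¹ ^ k :=
  summable_geometric_of_lt_one (by positivity)
    (inv_lt_one_of_one_lt₀ (by exact_mod_cast (Fact.out : p.Prime).one_lt))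

lemma summable_mul_pow (c : ℕ → ℤ_[p]) : Summable fun k ↦ c k * (p : ℤ_[p]) ^ k :=
  .of_norm_bounded summable_geometric_inv_prime fun _ ↦ norm_mul_pow_le _ _

lemma summable_p_pow : Summable fun k ↦ (p : ℤ_[p]) ^ k := by
  simpa using summable_mul_pow (p := p) fun _ ↦ 1

lemma tsum_mul_pow_eq (c : ℕ → ℤ_[p]) (k : ℕ) :
    ∑' j, c j * (p : ℤ_[p]) ^ j =
      ∑ j ∈ Finset.range k, c j * (p : ℤ_[p]) ^ j + (p : ℤ_[p]) ^ k * ∑' j, c (j + k) * p ^ j := by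
  rw [← (summable_mul_pow c).sum_add_tsum_nat_add k,
    ← (summable_mul_pow fun j ↦ c (j + k)).tsum_mul_left]
  exact congrArg _ (tsum_congr fun j ↦ by ring)

lemma toZModPow_tsum_mul_pow (c : ℕ → ℤ_[p]) (k : ℕ) :
    toZModPow k (∑' j, c j * (p : ℤ_[p]) ^ j) =
      ∑ j ∈ Finset.range k, toZModPow k (c j) * (p : ZMod (p ^ k)) ^ j := by
  rw [tsum_mul_pow_eq c k, map_add, map_mul, map_pow, map_natCast, ← Nat.cast_pow,
    ZMod.natCast_self, zero_mul, add_zero, map_sum]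
  simp only [map_mul, map_pow, map_natCast]

lemma eq_zero_of_forall_pow_dvd {x : ℤ_[p]} (h : ∀ k, (p : ℤ_[p]) ^ k ∣ x) : x = 0 := by
  refine ext_of_toZModPow.mp fun k ↦ ?_
  rw [map_zero, ← RingHom.mem_ker, ker_toZModPow, Ideal.mem_span_singleton]
  exact h k

lemma tsum_two_pow : ∑' j : ℕ, (2 : ℤ_[2]) ^ j = -1 := by
  have hs : Summable fun j : ℕ ↦ (2 : ℤ_[2]) ^ j := by simpa using summable_p_pow (p := 2)
  have h := hs.tsum_eq_zero_add
  simp only [pow_zero, pow_succ, hs.tsum_mul_right] at h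
  linear_combination -h

end PadicInt

noncomputable def piTM (w : ℤ → Fin 2) : ℤ_[2] := ∑' k, (digit w k : ℤ_[2]) * 2 ^ k

lemma piTM_eq_sum_add (w : ℤ → Fin 2) (k : ℕ) :
    piTM w = partialSum w k + 2 ^ k * ∑' j, (digit w (j + k) : ℤ_[2]) * 2 ^ j := by
  rw [piTM]
  simpa [partialSum] using PadicInt.tsum_mul_pow_eq (p := 2) (fun j ↦ digit w j) k

lemma piTM_eq_digit_add (w : ℤ → Fin 2) : piTM w = digit w 0 + 2 * piTM (desubst w) := by
  simpa [partialSum, digit_succ, piTM] using piTM_eq_sum_add w 1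

lemma val_toZModPow_piTM (w : ℤ → Fin 2) (k : ℕ) :
    (PadicInt.toZModPow k (piTM w)).val = partialSum w k := by
  have := PadicInt.toZModPow_tsum_mul_pow (p := 2) (fun j ↦ digit w j) k
  simp only [Nat.cast_ofNat, map_natCast] at this
  rw [piTM, this, ← ZMod.val_natCast_of_lt (partialSum_lt w k), partialSum]
  push_cast
  rfl

lemma piTM_eq_of_digit_eventually_eq {w : ℤ → Fin 2} {K c : ℕ}
    (h : ∀ j ≥ K, digit w j = c) : piTM w = ((partialSum w K - c * 2 ^ K : ℤ) : ℤ_[2]) := by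
  rw [piTM_eq_sum_add w K]
  simp only [h _ (Nat.le_add_left _ _)]
  rw [Summable.tsum_mul_left _ (by simpa using PadicInt.summable_p_pow (p := 2)),
    PadicInt.tsum_two_pow]
  push_cast
  ring

lemma eventually_blockPhase_eq (w : ℤ → Fin 2) : ∀ᶠ v in 𝓝 w, blockPhase v = blockPhase w := by
  have h (i : ℤ) : ∀ᶠ v in 𝓝 w, v i = w i :=
    (continuous_apply i).continuousAt.eventually_mem ((isOpen_discrete {w i}).mem_nhds rfl)
  filter_upwards [h 0, h 1, h 2, h 3] with v h₀ h₁ h₂ h₃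
  simp only [blockPhase, h₀, h₁, h₂, h₃]

lemma continuous_blockPhase : Continuous blockPhase :=
  continuous_iff_continuousAt.2 fun w ↦ by
    rw [ContinuousAt, nhds_discrete ℕ, tendsto_pure]
    exact eventually_blockPhase_eq w

lemma continuous_desubst : Continuous desubst :=
  continuous_pi fun n ↦ continuous_iff_continuousAt.2 fun w ↦
    (continuous_apply (2 * n - blockPhase w)).continuousAt.congr <| by
      filter_upwards [eventually_blockPhase_eq w] with v hv
      simp only [desubst, hv]

lemma continuous_piTM : Continuous piTM := by
  refine continuous_tsum (u := fun k ↦ (2 : ℝ)⁻¹ ^ k) (fun k ↦ ?_) ?_ fun k w ↦ ?_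
  · exact ((continuous_of_discreteTopology (f := ((↑) : ℕ → ℤ_[2]))).comp
      (continuous_blockPhase.comp (continuous_desubst.iterate k))).mul continuous_const
  · simpa using PadicInt.summable_geometric_inv_prime (p := 2)
  · simpa using PadicInt.norm_mul_pow_le (p := 2) (digit w k) k

lemma piTM_shiftZ {w : ℤ → Fin 2} (hw : w ∈ Omega) : piTM (shiftZ w) = piTM w + 1 := by
  rw [← sub_eq_zero, sub_add_eq_sub_sub]
  refine PadicInt.eq_zero_of_forall_pow_dvd fun k ↦ ?_
  induction k generalizing w with
  | zero => exact one_dvd _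
  | succ k ih =>
    have hb := blockPhase_shiftZ hw
    rcases Nat.le_one_iff_eq_zero_or_eq_one.mp (blockPhase_le_one w) with h | h
    · -- the lowest digit goes from `0` to `1`
      rw [piTM_eq_digit_add, piTM_eq_digit_add w, digit_zero, digit_zero, h,
        desubst_shiftZ_of_blockPhase_eq_zero hw h,
        show blockPhase (shiftZ w) = 1 by omega]
      simp
    · -- the lowest digit goes from `1` to `0`, with a carry into `desubst w`
      rw [piTM_eq_digit_add, piTM_eq_digit_add w, digit_zero, digit_zero, h,
        desubst_shiftZ_of_blockPhase_eq_one hw h,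
        show blockPhase (shiftZ w) = 0 by omega, pow_succ', Nat.cast_ofNat]
      convert mul_dvd_mul_left (2 : ℤ_[2]) (ih (mapsTo_desubst hw)) using 1
      norm_num
      ring

lemma surjOn_piTM : SurjOn piTM Omega univ := by
  have hclosed : IsClosed (piTM '' Omega) :=
    (isClosed_Omega.isCompact.image continuous_piTM).isClosed
  have hsub : range (fun n : ℕ ↦ piTM tmZ + n) ⊆ piTM '' Omega := by
    rintro _ ⟨n, rfl⟩
    refine ⟨shiftZ^[n] tmZ, mapsTo_shiftZ.iterate n tmZ_mem_Omega, ?_⟩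
    induction n with
    | zero => simp
    | succ n ih =>
      rw [iterate_succ_apply', piTM_shiftZ (mapsTo_shiftZ.iterate n tmZ_mem_Omega), ih]
      push_cast
      ring
  have hdense : DenseRange fun n : ℕ ↦ piTM tmZ + n :=
    (Homeomorph.addLeft (piTM tmZ)).surjective.denseRange.comp PadicInt.denseRange_natCast
      (Homeomorph.addLeft _).continuous
  exact fun z _ ↦ closure_minimal hsub hclosed (hdense z)

lemma two_le_encard_fiber (z : ℤ_[2]) : 2 ≤ (Omega ∩ piTM ⁻¹' {z}).encard := by
  obtain ⟨w, hw, rfl⟩ := surjOn_piTM (mem_univ z)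
  have hflip : piTM (flipZ w) = piTM w := by simp only [piTM, digit_flipZ]
  rw [← encard_pair (flipZ_ne w).symm]
  refine encard_le_encard (insert_subset ⟨hw, rfl⟩ (singleton_subset_iff.2 ?_))
  exact ⟨flipZ_mem_Omega hw, hflip⟩

/-- The words of `Omega` over `z` are concatenations of blocks `ζ^k(a)` starting at the positions
`≡ -(z mod 2^k)` mod `2^k`; `SameBlock z n n'` says that `n` and `n'` lie in a common block. -/
def SameBlock (z : ℤ_[2]) (n n' : ℤ) : Prop :=
  ∃ k : ℕ, (n + (toZModPow k z).val) / 2 ^ k = (n' + (toZModPow k z).val) / 2 ^ k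

lemma apply_eq_desubst_iterate_ediv (k : ℕ) {w : ℤ → Fin 2} (hw : w ∈ Omega) (n : ℤ) :
    w n = desubst^[k] w ((n + partialSum w k) / 2 ^ k) +
      tm ((n + partialSum w k) % 2 ^ k).toNat := by
  have h2k : (0 : ℤ) < 2 ^ k := by positivity
  have h₀ := Int.emod_nonneg (n + partialSum w k) h2k.ne'
  have h₁ := Int.emod_lt_of_pos (n + partialSum w k) h2k
  have h₂ := Int.mul_ediv_add_emod (n + partialSum w k) (2 ^ k)
  rw [← apply_eq_desubst_iterate_add_tm k hw _ (by zify; rwa [Int.toNat_of_nonneg h₀]),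
    Int.toNat_of_nonneg h₀]
  congr 1
  omega

lemma apply_add_apply_eq_of_sameBlock {z : ℤ_[2]} {w₁ w₂ : ℤ → Fin 2}
    (hw₁ : w₁ ∈ Omega ∩ piTM ⁻¹' {z}) (hw₂ : w₂ ∈ Omega ∩ piTM ⁻¹' {z}) {n n' : ℤ}
    (h : SameBlock z n n') : w₁ n + w₂ n = w₁ n' + w₂ n' := by
  obtain ⟨k, hk⟩ := h
  have hm₁ : (toZModPow k z).val = partialSum w₁ k := by
    rw [← val_toZModPow_piTM, hw₁.2]
  have hm₂ : (toZModPow k z).val = partialSum w₂ k := by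
    rw [← val_toZModPow_piTM, hw₂.2]
  rw [apply_eq_desubst_iterate_ediv k hw₁.1 n, apply_eq_desubst_iterate_ediv k hw₁.1 n',
    apply_eq_desubst_iterate_ediv k hw₂.1 n, apply_eq_desubst_iterate_ediv k hw₂.1 n', ← hm₁,
    ← hm₂, hk]
  exact fin_two_add_add_add_cancel _ _ _ _

lemma encard_fiber_le (z : ℤ_[2]) (A : Finset ℤ) (hA : ∀ n, ∃ a ∈ A, SameBlock z n a) :
    (Omega ∩ piTM ⁻¹' {z}).encard ≤ 2 ^ A.card := by
  have hinj : InjOn (fun w (a : A) ↦ w a) (Omega ∩ piTM ⁻¹' {z}) := by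
    intro w₁ hw₁ w₂ hw₂ h
    funext n
    obtain ⟨a, ha, hna⟩ := hA n
    have := apply_add_apply_eq_of_sameBlock hw₁ hw₂ hna
    rw [show w₁ a = w₂ a from congrFun h ⟨a, ha⟩] at this
    exact fin_two_eq_of_add_eq_add_self this
  rw [← hinj.encard_image]
  refine encard_le_card.trans ?_
  simp [ENat.card_eq_coe_fintype_card]

lemma sameBlock_intCast (t n : ℤ) :
    SameBlock (t : ℤ_[2]) n (-t) ∨ SameBlock (t : ℤ_[2]) n (-t - 1) := by
  set k := (n + t).natAbs
  have h2k : (0 : ℤ) < 2 ^ k := by positivity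
  have hk : |n + t| < 2 ^ k := by
    rw [← Int.natCast_natAbs]; exact_mod_cast Nat.lt_two_pow_self
  have key (a : ℤ) : (a + (toZModPow k (t : ℤ_[2])).val) / 2 ^ k = (a + t) / 2 ^ k - t / 2 ^ k := by
    rw [map_intCast, ZMod.val_intCast, Nat.cast_pow, Nat.cast_ofNat, Int.emod_def,
      show a + (t - 2 ^ k * (t / 2 ^ k)) = a + t + -(t / 2 ^ k) * 2 ^ k by ring,
      Int.add_mul_ediv_right _ _ h2k.ne']
    ring
  rcases le_or_gt 0 (n + t) with h | h
  · refine .inl ⟨k, ?_⟩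
    rw [key, key, neg_add_cancel, Int.zero_ediv, Int.ediv_eq_zero_of_lt h (abs_lt.mp hk).2]
  · refine .inr ⟨k, ?_⟩
    rw [key, key, show -t - 1 + t = -1 by ring,
      Int.ediv_eq_neg_one_of_neg_of_le (a := n + t) h (by linarith [(abs_lt.mp hk).1]),
      Int.ediv_eq_neg_one_of_neg_of_le (a := -1) (by norm_num) (by linarith)]

lemma exists_partialSum_window {w : ℤ → Fin 2} (h : ∀ c K, ∃ j ≥ K, digit w j ≠ c) (N : ℕ) :
    ∃ k, N ≤ partialSum w k ∧ partialSum w k + N < 2 ^ k := by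
  obtain ⟨j₁, hj₁, hd₁⟩ := h 0 N
  obtain ⟨j₀, hj₀, hd₀⟩ := h 1 (j₁ + 1)
  have hd₁ : digit w j₁ = 1 := by have := digit_le_one w j₁; omega
  have hd₀ : digit w j₀ = 0 := by have := digit_le_one w j₀; omega
  have hN : N < 2 ^ N := Nat.lt_two_pow_self
  have hN₁ : 2 ^ N ≤ 2 ^ j₁ := Nat.pow_le_pow_right two_pos hj₁
  have hN₀ : 2 ^ N ≤ 2 ^ j₀ := Nat.pow_le_pow_right two_pos (by omega)
  have hm₁ : partialSum w (j₁ + 1) ≤ partialSum w (j₀ + 1) := partialSum_mono w (by omega)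
  have hm₀ := partialSum_lt w j₀
  rw [partialSum_succ, hd₁, one_mul] at hm₁
  refine ⟨j₀ + 1, by omega, ?_⟩
  rw [partialSum_succ, hd₀, pow_succ]
  omega

lemma sameBlock_zero_of_notMem_range {z : ℤ_[2]} (hz : z ∉ range ((↑) : ℤ → ℤ_[2])) (n : ℤ) :
    SameBlock z n 0 := by
  obtain ⟨w, -, rfl⟩ := surjOn_piTM (mem_univ z)
  have hfreq (c K : ℕ) : ∃ j ≥ K, digit w j ≠ c := by
    by_contra! h
    exact hz ⟨_, (piTM_eq_of_digit_eventually_eq h).symm⟩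
  obtain ⟨k, hk₁, hk₂⟩ := exists_partialSum_window hfreq n.natAbs
  have : ((partialSum w k : ℕ) : ℤ) + n.natAbs < 2 ^ k := by exact_mod_cast hk₂
  refine ⟨k, ?_⟩
  rw [val_toZModPow_piTM, Int.ediv_eq_zero_of_lt (by omega) (by omega),
    Int.ediv_eq_zero_of_lt (by omega) (by omega)]

lemma encard_fiber_le_two {z : ℤ_[2]} (hz : z ∉ range ((↑) : ℤ → ℤ_[2])) :
    (Omega ∩ piTM ⁻¹' {z}).encard ≤ 2 := by
  simpa using encard_fiber_le z {0} fun n ↦ ⟨0, Finset.mem_singleton_self 0,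
    sameBlock_zero_of_notMem_range hz n⟩

theorem factor_map_fibers :
    ∃ π : (ℤ → Fin 2) → ℤ_[2],
      ContinuousOn π Omega ∧ Set.SurjOn π Omega Set.univ ∧
      (∀ w ∈ Omega, π (shiftZ w) = π w + 1) ∧
      (∀ z : ℤ_[2], (Omega ∩ π ⁻¹' {z}).encard ≤ 4) ∧
      (∀ z : ℤ_[2], z ∉ Set.range ((↑·) : ℤ → ℤ_[2]) →
        (Omega ∩ π ⁻¹' {z}).encard = 2) := by
  refine ⟨piTM, continuous_piTM.continuousOn, surjOn_piTM, fun w hw ↦ piTM_shiftZ hw,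
    fun z ↦ ?_, fun z hz ↦ (encard_fiber_le_two hz).antisymm (two_le_encard_fiber z)⟩
  by_cases hz : z ∈ range ((↑) : ℤ → ℤ_[2])
  · obtain ⟨t, rfl⟩ := hz
    have hA (n : ℤ) : ∃ a ∈ ({-t, -t - 1} : Finset ℤ), SameBlock t n a := by
      rcases sameBlock_intCast t n with h | h
      exacts [⟨_, by simp, h⟩, ⟨_, by simp, h⟩]
    calc (Omega ∩ piTM ⁻¹' {(t : ℤ_[2])}).encard ≤ 2 ^ ({-t, -t - 1} : Finset ℤ).card :=
          encard_fiber_le _ _ hA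
      _ = 4 := by rw [Finset.card_pair (by omega)]; rfl
  · exact (encard_fiber_le_two hz).trans (by norm_num)
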